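/- Suppose g is left-cancellative, i.e., for every s : E the map t ↦ g s t is injective. Then for every list T : List E and all x, y : E, db T x = db T y if and only if T = [] or x = y (db is conditionally left-cancellative). -/
import Mathlib


/-- Block-chained decryption: `db [] z = []` and `db (x :: Y) z = g x z :: db Y x`. -/
def db {E : Type*} (g : E → E → E) : List E → E → List E
  | [], _ => []
  | x :: Y, z => g x z :: db g Y x

/-- If `g` is left-cancellative, then `db` is conditionally left-cancellative. -/
theorem db_cond_left_cancel {E : Type*} (g : E → E → E)
    (hlc : ∀ s : E, Function.Injective (g s)) :
    ∀ (T : List E) (x y : E), db g T x = db g T y ↔ T = [] ∨ x = y := by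
  intro T x y
  cases T with
  | nil => simp [db]
  | cons a Y =>
    simp only [db, List.cons.injEq]
    constructor
    · rintro ⟨h1, -⟩
      exact Or.inr (hlc a h1)
    · rintro (h | rfl)
      · exact absurd h (List.cons_ne_nil a Y)
      · exact ⟨rfl, trivial⟩
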